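/- arXiv:0802.0981 — 2 statements merged into one kernel-verified Lean document; each statement's English description precedes it below -/
import Mathlib

section
/- Let (X,τ) be a topological space and φ₁, φ₂ operations on X. If φ₂ is regular with respect to the family of φ₁-open sets and either φ₂(A) ⊇ A for all A ⊆ X or φ₂(A) ⊇ φ₁(A) for all A ⊆ X, then a subset K of X satisfies φ₁₂cl K ⊆ K if and only if φ₁₂cl K = K; consequently the closed sets of the topology of φ₁₂-open sets are exactly the sets K with φ₁₂cl K = K. -/
open Set

/-- An operation on a topological space `X`: a map `φ : Set X → Set X` with
`interior A ⊆ φ A` for all `A` and `φ ∅ = ∅`. -/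
def IsOperation {X : Type*} [TopologicalSpace X] (φ : Set X → Set X) : Prop :=
  (∀ A : Set X, interior A ⊆ φ A) ∧ φ ∅ = ∅

/-- `A` is `φ`-open if `A ⊆ φ A`. -/
def PhiOpen {X : Type*} (φ : Set X → Set X) (A : Set X) : Prop := A ⊆ φ A

/-- `φ₁₂`-interior: `x ∈ φ₁₂int A` iff there is a `φ₁`-open `U` with `x ∈ U` and `φ₂ U ⊆ A`. -/
def PhiInt {X : Type*} (φ₁ φ₂ : Set X → Set X) (A : Set X) : Set X :=
  {x | ∃ U : Set X, PhiOpen φ₁ U ∧ x ∈ U ∧ φ₂ U ⊆ A}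

/-- `φ₁₂`-closure: `x ∈ φ₁₂cl A` iff `φ₂ U ∩ A ≠ ∅` for every `φ₁`-open `U` containing `x`. -/
def PhiCl {X : Type*} (φ₁ φ₂ : Set X → Set X) (A : Set X) : Set X :=
  {x | ∀ U : Set X, PhiOpen φ₁ U → x ∈ U → (φ₂ U ∩ A).Nonempty}

/-- `A` is `φ₁₂`-open if `A ⊆ φ₁₂int A`. -/
def Phi12Open {X : Type*} (φ₁ φ₂ : Set X → Set X) (A : Set X) : Prop :=
  A ⊆ PhiInt φ₁ φ₂ A

/-- `φ₂` is regular w.r.t. the family of `φ₁`-open sets. -/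
def PhiRegular {X : Type*} (φ₂ φ₁ : Set X → Set X) : Prop :=
  ∀ x : X, ∀ U V : Set X, PhiOpen φ₁ U → PhiOpen φ₁ V → x ∈ U → x ∈ V →
    ∃ W : Set X, PhiOpen φ₁ W ∧ x ∈ W ∧ φ₂ W ⊆ φ₂ U ∩ φ₂ V

/-- A filter `F` `φ₁₂`-converges to `a` if for every `φ₁`-open `U` containing `a`
there is `S ∈ F` with `S ⊆ φ₂ U`. -/
def PhiConv {X : Type*} (φ₁ φ₂ : Set X → Set X) (F : Filter X) (a : X) : Prop :=
  ∀ U : Set X, PhiOpen φ₁ U → a ∈ U → ∃ S ∈ F, S ⊆ φ₂ U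

/-- A filter `F` `φ₁₂`-accumulates to `a` if `a ∈ φ₁₂cl S` for every `S ∈ F`. -/
def PhiAcc {X : Type*} (φ₁ φ₂ : Set X → Set X) (F : Filter X) (a : X) : Prop :=
  ∀ S ∈ F, a ∈ PhiCl φ₁ φ₂ S

/-- `X` is `φ₁₂`-T₂. -/
def PhiT2 {X : Type*} (φ₁ φ₂ : Set X → Set X) : Prop :=
  ∀ x y : X, x ≠ y → ∃ U V : Set X, PhiOpen φ₁ U ∧ PhiOpen φ₁ V ∧
    x ∈ U ∧ y ∈ V ∧ φ₂ U ∩ φ₂ V = ∅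

/-- `A` is `φ₁₂`-compact relative to `X`. -/
def PhiCompact {X : Type*} (φ₁ φ₂ : Set X → Set X) (A : Set X) : Prop :=
  ∀ 𝒰 : Set (Set X), (∀ U ∈ 𝒰, PhiOpen φ₁ U) → A ⊆ ⋃₀ 𝒰 →
    ∃ 𝒰' ⊆ 𝒰, 𝒰'.Finite ∧ A ⊆ ⋃ U ∈ 𝒰', φ₂ U


section PhiClosure

variable {X : Type*} {φ₁ φ₂ : Set X → Set X}

theorem compl_phiCl_eq_phiInt_compl (K : Set X) :
    (PhiCl φ₁ φ₂ K)ᶜ = PhiInt φ₁ φ₂ Kᶜ := by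
  ext x
  simp only [PhiCl, PhiInt, mem_compl_iff, mem_ofPred_eq, not_forall, exists_prop,
    not_nonempty_iff_eq_empty, subset_compl_iff_disjoint_right, disjoint_iff_inter_eq_empty]

theorem phi12Open_compl_iff_phiCl_subset (K : Set X) :
    Phi12Open φ₁ φ₂ Kᶜ ↔ PhiCl φ₁ φ₂ K ⊆ K := by
  rw [Phi12Open, ← compl_phiCl_eq_phiInt_compl, compl_subset_compl]

theorem subset_phiCl (hφ : ∀ U, PhiOpen φ₁ U → U ⊆ φ₂ U) (K : Set X) :
    K ⊆ PhiCl φ₁ φ₂ K :=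
  fun x hx U hU hxU => ⟨x, hφ U hU hxU, hx⟩

theorem PhiOpen.subset_of_ge {U : Set X}
    (hge : (∀ A : Set X, A ⊆ φ₂ A) ∨ (∀ A : Set X, φ₁ A ⊆ φ₂ A)) (hU : PhiOpen φ₁ U) :
    U ⊆ φ₂ U := by
  rcases hge with h | h
  · exact h U
  · exact hU.trans (h U)

end PhiClosure

theorem stmt_2_general {X : Type*} (φ₁ φ₂ : Set X → Set X)
    (hge : (∀ A : Set X, A ⊆ φ₂ A) ∨ (∀ A : Set X, φ₁ A ⊆ φ₂ A)) :
    (∀ K : Set X, PhiCl φ₁ φ₂ K ⊆ K ↔ PhiCl φ₁ φ₂ K = K) ∧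
    (∀ K : Set X, Phi12Open φ₁ φ₂ Kᶜ ↔ PhiCl φ₁ φ₂ K = K) := by
  have hK : ∀ K : Set X, K ⊆ PhiCl φ₁ φ₂ K := subset_phiCl fun _ hU => hU.subset_of_ge hge
  have hclosed : ∀ K : Set X, PhiCl φ₁ φ₂ K ⊆ K ↔ PhiCl φ₁ φ₂ K = K := fun K =>
    ⟨fun h => h.antisymm (hK K), Eq.subset⟩
  exact ⟨hclosed, fun K => (phi12Open_compl_iff_phiCl_subset K).trans (hclosed K)⟩

/-- If `φ₂` is regular w.r.t. the `φ₁`-open sets and (`φ₂ ≥ ι` or `φ₂ ≥ φ₁`),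
then `φ₁₂cl K ⊆ K ↔ φ₁₂cl K = K`, and the closed sets of the topology of `φ₁₂`-open sets
are exactly the sets `K` with `φ₁₂cl K = K`. -/
theorem stmt_2 {X : Type*} [TopologicalSpace X] (φ₁ φ₂ : Set X → Set X)
    (h₁ : IsOperation φ₁) (h₂ : IsOperation φ₂)
    (hreg : PhiRegular φ₂ φ₁)
    (hge : (∀ A : Set X, A ⊆ φ₂ A) ∨ (∀ A : Set X, φ₁ A ⊆ φ₂ A)) :
    (∀ K : Set X, PhiCl φ₁ φ₂ K ⊆ K ↔ PhiCl φ₁ φ₂ K = K) ∧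
    (∀ K : Set X, Phi12Open φ₁ φ₂ Kᶜ ↔ PhiCl φ₁ φ₂ K = K) :=
  stmt_2_general φ₁ φ₂ hge
end

section
/- Let (X,τ) be a topological space, φ₁, φ₂ operations on X with φ₂ regular with respect to the family of φ₁-open sets, A ⊆ X and a ∈ X. If a ∈ φ₁₂cl A, then there exists a proper filter ℱ on X with A ∈ ℱ that φ₁₂-converges to a. -/
/-! Regularity of `φ₂` makes the sets `φ₂ U`, for `φ₁`-open `U ∋ a`, a filter base, and
`a ∈ φ₁₂cl A` says precisely that each of them meets `A`; the trace of this base on `A` is the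
required filter. -/

open Set

open Filter

theorem phiOpen_univ {X : Type*} [TopologicalSpace X] {φ : Set X → Set X} (hφ : IsOperation φ) :
    PhiOpen φ univ := by
  simpa only [PhiOpen, interior_univ] using hφ.1 univ

def phiNhds {X : Type*} (φ₁ φ₂ : Set X → Set X) (a : X) : Filter X :=
  ⨅ U ∈ {U | PhiOpen φ₁ U ∧ a ∈ U}, 𝓟 (φ₂ U)

section phiNhds

variable {X : Type*} {φ₁ φ₂ : Set X → Set X}

theorem phiConv_iff_le_phiNhds {F : Filter X} {a : X} :
    PhiConv φ₁ φ₂ F a ↔ F ≤ phiNhds φ₁ φ₂ a := by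
  simp only [PhiConv, phiNhds, le_iInf_iff, le_principal_iff, exists_mem_subset_iff,
    mem_ofPred_eq, and_imp]

theorem hasBasis_phiNhds [TopologicalSpace X] (h₁ : IsOperation φ₁) (hreg : PhiRegular φ₂ φ₁)
    (a : X) : (phiNhds φ₁ φ₂ a).HasBasis (fun U => PhiOpen φ₁ U ∧ a ∈ U) φ₂ := by
  refine hasBasis_biInf_principal ?_ ⟨univ, phiOpen_univ h₁, mem_univ a⟩
  rintro U ⟨hU, haU⟩ V ⟨hV, haV⟩
  obtain ⟨W, hW, haW, hWUV⟩ := hreg a U V hU hV haU haV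
  exact ⟨W, ⟨hW, haW⟩, (hWUV.trans inter_subset_left :), (hWUV.trans inter_subset_right :)⟩

theorem phiNhds_inf_principal_neBot_iff [TopologicalSpace X] (h₁ : IsOperation φ₁)
    (hreg : PhiRegular φ₂ φ₁) {A : Set X} {a : X} :
    (phiNhds φ₁ φ₂ a ⊓ 𝓟 A).NeBot ↔ a ∈ PhiCl φ₁ φ₂ A := by
  rw [(hasBasis_phiNhds h₁ hreg a).inf_principal_neBot_iff]
  exact ⟨fun h U hU haU => h ⟨hU, haU⟩, fun h U hU => h U hU.1 hU.2⟩

end phiNhds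

theorem stmt_11_general {X : Type*} [TopologicalSpace X] (φ₁ φ₂ : Set X → Set X)
    (h₁ : IsOperation φ₁)
    (hreg : PhiRegular φ₂ φ₁)
    (A : Set X) (a : X) (ha : a ∈ PhiCl φ₁ φ₂ A) :
    ∃ F : Filter X, F.NeBot ∧ A ∈ F ∧ PhiConv φ₁ φ₂ F a :=
  ⟨phiNhds φ₁ φ₂ a ⊓ 𝓟 A, (phiNhds_inf_principal_neBot_iff h₁ hreg).mpr ha,
    mem_inf_of_right (mem_principal_self A), phiConv_iff_le_phiNhds.mpr inf_le_left⟩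

/-- If `φ₂` is regular w.r.t. the `φ₁`-open sets and `a ∈ φ₁₂cl A`,
then there is a proper filter containing `A` that `φ₁₂`-converges to `a`. -/
theorem stmt_11 {X : Type*} [TopologicalSpace X] (φ₁ φ₂ : Set X → Set X)
    (h₁ : IsOperation φ₁) (h₂ : IsOperation φ₂)
    (hreg : PhiRegular φ₂ φ₁)
    (A : Set X) (a : X) (ha : a ∈ PhiCl φ₁ φ₂ A) :
    ∃ F : Filter X, F.NeBot ∧ A ∈ F ∧ PhiConv φ₁ φ₂ F a :=
  stmt_11_general φ₁ φ₂ h₁ hreg A a ha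
end
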